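/- Suppose X is a nonnegative random variable with E[X^β] = α/β, where β − α = −1, and its (α,β)-generalized equilibrium transform X* satisfies P[X* > t] ≤ P[X > t]/p for all t. Then for all t ≥ 0 with P[X > t] > 0: E[X^{-1} − t^{-1} | X > t] ≥ −1/(p β t^α). -/

import Mathlib

open MeasureTheory

/-- The law of `V_a`, with density `a x^(a-1)` on `(0,1]`. -/
noncomputable def vLaw (a : ℝ) : Measure ℝ :=
  (volume.restrict (Set.Ioc (0 : ℝ) 1)).withDensity
    (fun u => ENNReal.ofReal (a * u ^ (a - 1)))

/-- The `β`-power bias of a law `μ`. -/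
noncomputable def powerBias (β : ℝ) (μ : Measure ℝ) : Measure ℝ :=
  μ.withDensity (fun x => ENNReal.ofReal (x ^ β / ∫ y, y ^ β ∂μ))

/-- The `(α,β)`-generalized equilibrium transform of `μ`: the law of `V_α · X^(β)`. -/
noncomputable def eqLaw (α β : ℝ) (μ : Measure ℝ) : Measure ℝ :=
  ((vLaw α).prod (powerBias β μ)).map (fun p => p.1 * p.2)

/-!
For `x > t > 0` the section `{u | t < u x}` of the product defining `X*` is `(t/x, 1]`, on which
the density of `V_α` is at least `α (t/x)^(α-1)`. Hence, with `α - 1 = β` and `E[X^β] = α/β`,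
`P[X* > t] ≥ E[(β/α) X^β · α (t/X)^β (1 - t/X); X > t] = β t^α E[t⁻¹ - X⁻¹; X > t]`,
and the hypothesis `P[X* > t] ≤ P[X > t]/p` gives the bound.
-/

open Set

instance (a : ℝ) : SFinite (vLaw a) := by
  rw [vLaw]
  infer_instance

instance (β : ℝ) (μ : Measure ℝ) [SFinite μ] : SFinite (powerBias β μ) := by
  rw [powerBias]
  infer_instance

lemma isProbabilityMeasure_vLaw {a : ℝ} (ha : 0 < a) : IsProbabilityMeasure (vLaw a) := by
  have hdens : IntegrableOn (fun u : ℝ => a * u ^ (a - 1)) (Ioc 0 1) :=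
    ((intervalIntegral.intervalIntegrable_rpow' (by linarith)).1).const_mul a
  constructor
  rw [vLaw, withDensity_apply _ MeasurableSet.univ, Measure.restrict_univ,
    ← ofReal_integral_eq_lintegral_ofReal hdens]
  · rw [integral_const_mul, ← intervalIntegral.integral_of_le zero_le_one,
      integral_rpow (Or.inl (by linarith)), sub_add_cancel, Real.one_rpow,
      Real.zero_rpow ha.ne', mul_div_cancel₀ _ ha.ne', sub_zero, ENNReal.ofReal_one]
  · filter_upwards [ae_restrict_mem measurableSet_Ioc] with u hu
    exact mul_nonneg ha.le (Real.rpow_nonneg hu.1.le _)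

lemma vLaw_Ioi_ge {a r : ℝ} (ha : 1 ≤ a) (hr : 0 ≤ r) :
    ENNReal.ofReal (a * r ^ (a - 1) * (1 - r)) ≤ vLaw a (Ioi r) := by
  have hinter : Ioi r ∩ Ioc 0 1 = Ioc r 1 := by
    ext u
    exact ⟨fun ⟨hru, _, hu1⟩ => ⟨hru, hu1⟩, fun ⟨hru, hu1⟩ => ⟨hru, hr.trans_lt hru, hu1⟩⟩
  rw [vLaw, withDensity_apply _ measurableSet_Ioi, Measure.restrict_restrict measurableSet_Ioi,
    hinter, ENNReal.ofReal_mul (by positivity), ← Real.volume_Ioc, ← setLIntegral_const]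
  refine setLIntegral_mono' measurableSet_Ioc fun u hu => ENNReal.ofReal_le_ofReal ?_
  gcongr
  exact hu.1.le

lemma isFiniteMeasure_powerBias {β : ℝ} {μ : Measure ℝ}
    (hint : Integrable (fun x => x ^ β) μ) : IsFiniteMeasure (powerBias β μ) :=
  isFiniteMeasure_withDensity_ofReal (hint.div_const _).hasFiniteIntegral

lemma isFiniteMeasure_eqLaw {α β : ℝ} {μ : Measure ℝ} (hα : 0 < α)
    (hint : Integrable (fun x => x ^ β) μ) : IsFiniteMeasure (eqLaw α β μ) := by
  have := isProbabilityMeasure_vLaw hα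
  have := isFiniteMeasure_powerBias hint
  rw [eqLaw]
  infer_instance

lemma eqLaw_apply (α β : ℝ) (μ : Measure ℝ) [SFinite μ] {S : Set ℝ} (hS : MeasurableSet S) :
    eqLaw α β μ S =
      ∫⁻ x, ENNReal.ofReal (x ^ β / ∫ y, y ^ β ∂μ) * vLaw α ((· * x) ⁻¹' S) ∂μ := by
  have hmul : Measurable fun q : ℝ × ℝ => q.1 * q.2 := measurable_fst.mul measurable_snd
  rw [eqLaw, Measure.map_apply hmul hS, Measure.prod_apply_symm (hmul hS), powerBias,
    lintegral_withDensity_eq_lintegral_mul _ _ (measurable_measure_prodMk_right (hmul hS))]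
  · rfl
  · exact ((measurable_id.pow_const β).div_const _).ennreal_ofReal

lemma lintegral_inv_sub_inv_le_eqLaw {α β t : ℝ} {μ : Measure ℝ} [SFinite μ]
    (hβ : 0 < β) (hαβ : α - β = 1) (hmom : ∫ x, x ^ β ∂μ = α / β) (ht : 0 < t) :
    ∫⁻ x in Ioi t, ENNReal.ofReal (β * t ^ α * (t⁻¹ - x⁻¹)) ∂μ ≤ eqLaw α β μ (Ioi t) := by
  rw [eqLaw_apply α β μ measurableSet_Ioi, hmom]
  refine (setLIntegral_mono' measurableSet_Ioi fun x (hx : t < x) => ?_).trans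
    (setLIntegral_le_lintegral _ _)
  have hx0 : 0 < x := ht.trans hx
  have hα : 0 < α := by linarith
  have hsection : (· * x) ⁻¹' Ioi t = Ioi (t / x) := by
    ext u
    simp [div_lt_iff₀ hx0]
  have hweight : β * t ^ α * (t⁻¹ - x⁻¹) =
      x ^ β / (α / β) * (α * (t / x) ^ (α - 1) * (1 - t / x)) := by
    rw [show α - 1 = β by linarith, Real.div_rpow ht.le hx0.le,
      show α = β + 1 by linarith, Real.rpow_add ht, Real.rpow_one]
    field_simp
  rw [hweight, ENNReal.ofReal_mul (by positivity), hsection]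
  gcongr
  exact vLaw_Ioi_ge (by linarith) (div_pos ht hx0).le

lemma mul_setIntegral_inv_sub_inv_le_eqLaw {α β t : ℝ} {μ : Measure ℝ} [SFinite μ]
    (hβ : 0 < β) (hαβ : α - β = 1) (hint : Integrable (fun x => x ^ β) μ)
    (hmom : ∫ x, x ^ β ∂μ = α / β) (ht : 0 < t) :
    β * t ^ α * ∫ x in Ioi t, (t⁻¹ - x⁻¹) ∂μ ≤ (eqLaw α β μ (Ioi t)).toReal := by
  have : IsFiniteMeasure (eqLaw α β μ) := isFiniteMeasure_eqLaw (by linarith) hint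
  have hnonneg : 0 ≤ᵐ[μ.restrict (Ioi t)] fun x => β * t ^ α * (t⁻¹ - x⁻¹) := by
    filter_upwards [ae_restrict_mem measurableSet_Ioi] with x (hx : t < x)
    have : x⁻¹ ≤ t⁻¹ := inv_anti₀ ht hx.le
    exact mul_nonneg (by positivity) (by linarith)
  rw [← integral_const_mul, integral_eq_lintegral_of_nonneg_ae hnonneg
    ((measurable_const.sub measurable_inv).const_mul _).aestronglyMeasurable]
  exact ENNReal.toReal_mono (measure_ne_top _ _)
    (lintegral_inv_sub_inv_le_eqLaw hβ hαβ hmom ht)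

theorem stmt6 (μ : Measure ℝ) [IsProbabilityMeasure μ] (α β p : ℝ)
    (hα : 0 < α) (hβ : 0 < β) (hαβ : α - β = 1)
    (hint : Integrable (fun x => x ^ β) μ)
    (hmom : ∫ x, x ^ β ∂μ = α / β)
    (hstar : ∀ t : ℝ, (eqLaw α β μ {x | t < x}).toReal ≤ (μ {x | t < x}).toReal / p) :
    ∀ t : ℝ, 0 ≤ t → 0 < (μ {x | t < x}).toReal →
      -((μ {x | t < x}).toReal / (p * β * t ^ α))
        ≤ ∫ x in {x | t < x}, (x⁻¹ - t⁻¹) ∂μ := by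
  intro t ht _
  rcases ht.eq_or_lt with rfl | ht0
  · rw [Real.zero_rpow hα.ne', mul_zero, div_zero, neg_zero]
    refine setIntegral_nonneg measurableSet_Ioi fun x (hx : 0 < x) => ?_
    simpa using hx.le
  · have key := (mul_setIntegral_inv_sub_inv_le_eqLaw hβ hαβ hint hmom ht0).trans (hstar t)
    have hpos : 0 < β * t ^ α := by positivity
    rw [neg_le, ← integral_neg]
    simp only [neg_sub]
    calc ∫ x in Ioi t, (t⁻¹ - x⁻¹) ∂μ ≤ (μ (Ioi t)).toReal / p / (β * t ^ α) :=
          (le_div_iff₀' hpos).2 key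
      _ = (μ (Ioi t)).toReal / (p * β * t ^ α) := by rw [div_div, mul_assoc]
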